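/- arXiv:1003.4919 — 5 statements merged into one kernel-verified Lean document; each statement's English description precedes it below -/
import Mathlib

section
/- Let p be a prime, and let d, m, n, e be positive integers with md ≥ ne. Let V be a finite d-dimensional vector space over GF(p^m) and W a finite e-dimensional vector space over GF(p^n), and let λ : V → W be a surjective homomorphism of additive groups. Then λ is GF(p^m)*-perfect nonlinear: for every α ∈ GF(p^m) with α ≠ 0 and α ≠ 1, and for every β ∈ W, the number of v ∈ V satisfying λ(α • v) − λ(v) = β equals p^(md − ne), i.e. equals |V|/|W|. -/
/-! Since `f` is additive, `f (α • v) - f v = f ((α - 1) • v)`, and `v ↦ (α - 1) • v` is a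
bijection of `V` for `α ≠ 1`. So the derivative of `f` in direction `α` is again a surjective
additive homomorphism, and each of its fibres is a coset of its kernel, of size `|V| / |W|`. -/

theorem AddMonoidHom.card_fiber_mul_card_of_surjective {G H : Type*} [AddGroup G] [AddGroup H]
    (f : G →+ H) (hf : Function.Surjective f) (b : H) :
    Nat.card {x | f x = b} * Nat.card H = Nat.card G := by
  obtain ⟨x₀, hx₀⟩ := hf b
  have fiber_equiv_ker : {x | f x = b} ≃ f.ker :=
    { toFun x := ⟨x - x₀, by rw [AddMonoidHom.mem_ker, map_sub, hx₀, sub_eq_zero]; exact x.2⟩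
      invFun x := ⟨x + x₀, by rw [Set.mem_ofPred_eq, map_add, f.mem_ker.1 x.2, zero_add, hx₀]⟩
      left_inv x := by simp
      right_inv x := by simp }
  rw [Nat.card_congr fiber_equiv_ker, ← f.ker.card_mul_index, AddSubgroup.index_ker,
    f.range_eq_top.2 hf, AddSubgroup.card_top]

theorem AddMonoidHom.card_fiber_smul_sub_mul_card {K V W : Type*} [DivisionRing K]
    [AddCommGroup V] [Module K V] [AddGroup W] (f : V →+ W) (hf : Function.Surjective f)
    {α : K} (hα : α ≠ 1) (β : W) :
    Nat.card {v | f (α • v) - f v = β} * Nat.card W = Nat.card V := by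
  let g : V →+ W := f.comp (DistribSMul.toAddMonoidHom V (α - 1))
  have hg : ∀ v, g v = f (α • v) - f v := fun v => by
    simp [g, sub_smul, map_sub]
  have hg_surj : Function.Surjective g := fun w => by
    obtain ⟨v, rfl⟩ := hf w
    exact ⟨(α - 1)⁻¹ • v, by simp [g, smul_smul, mul_inv_cancel₀ (sub_ne_zero.2 hα)]⟩
  simpa only [hg] using g.card_fiber_mul_card_of_surjective hg_surj β

theorem stmt_1_general (p : ℕ) (hp : p.Prime) (d m n e : ℕ)
    (hdim : n * e ≤ m * d)
    (K : Type*) [Field K] [Fintype K] (hK : Fintype.card K = p ^ m)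
    (L : Type*) [Field L] [Fintype L] (hL : Fintype.card L = p ^ n)
    (V : Type*) [AddCommGroup V] [Module K V] [Fintype V]
    (hV : Module.finrank K V = d)
    (W : Type*) [AddCommGroup W] [Module L W] [Fintype W]
    (hW : Module.finrank L W = e)
    (f : V →+ W) (hf : Function.Surjective f) :
    ∀ α : K, α ≠ 0 → α ≠ 1 → ∀ β : W,
      Nat.card {v : V | f (α • v) - f v = β} = p ^ (m * d - n * e) ∧
        Nat.card {v : V | f (α • v) - f v = β} = Fintype.card V / Fintype.card W := by
  intro α _ hα β
  have hcard := f.card_fiber_smul_sub_mul_card hf hα β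
  rw [Nat.card_eq_fintype_card (α := W), Nat.card_eq_fintype_card (α := V)] at hcard
  have hdiv := Nat.eq_div_of_mul_eq_left Fintype.card_ne_zero hcard
  have hcV : Fintype.card V = p ^ (m * d) := by
    rw [Module.card_eq_pow_finrank (K := K), hK, hV, ← pow_mul]
  have hcW : Fintype.card W = p ^ (n * e) := by
    rw [Module.card_eq_pow_finrank (K := L), hL, hW, ← pow_mul]
  exact ⟨by rw [hdiv, hcV, hcW, Nat.pow_div hdim hp.pos], hdiv⟩

/-- A surjective additive-group homomorphism `f : V → W` (with
`V` of dimension `d` over `GF(p^m)`, `W` of dimension `e` over `GF(p^n)`,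
`md ≥ ne`) is `GF(p^m)*`-perfect nonlinear: each derivative fibre has exactly
`p^(md - ne) = |V|/|W|` elements. -/
theorem stmt_1 (p : ℕ) (hp : p.Prime) (d m n e : ℕ)
    (hd : 0 < d) (hm : 0 < m) (hn : 0 < n) (he : 0 < e)
    (hdim : n * e ≤ m * d)
    (K : Type*) [Field K] [Fintype K] (hK : Fintype.card K = p ^ m)
    (L : Type*) [Field L] [Fintype L] (hL : Fintype.card L = p ^ n)
    (V : Type*) [AddCommGroup V] [Module K V] [Fintype V]
    (hV : Module.finrank K V = d)
    (W : Type*) [AddCommGroup W] [Module L W] [Fintype W]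
    (hW : Module.finrank L W = e)
    (f : V →+ W) (hf : Function.Surjective f) :
    ∀ α : K, α ≠ 0 → α ≠ 1 → ∀ β : W,
      Nat.card {v : V | f (α • v) - f v = β} = p ^ (m * d - n * e) ∧
        Nat.card {v : V | f (α • v) - f v = β} = Fintype.card V / Fintype.card W :=
  stmt_1_general p hp d m n e hdim K hK L hL V hV W hW f hf
end

section
/- Let m > 1 be an integer, let F be a finite field with 2^m elements, and let λ : F → F be a field automorphism of F. Then λ is (Fˣ, ·)-perfect nonlinear from F to F: for every α ∈ F with α ≠ 0 and α ≠ 1, and every β ∈ F, there exists exactly one x ∈ F such that λ(α · x) − λ(x) = β (equivalently, in characteristic 2, λ(α·x) + λ(x) = β). -/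
theorem RingEquiv.map_mul_sub_map_eq {R S : Type*} [Semiring R] [Ring S] (σ : R ≃+* S) (a x : R) :
    σ (a * x) - σ x = (σ a - 1) * σ x := by
  rw [map_mul, sub_one_mul]

theorem RingEquiv.bijective_map_mul_sub_map {R S : Type*} [Semiring R] [DivisionRing S]
    (σ : R ≃+* S) {a : R} (ha : a ≠ 1) : Function.Bijective fun x => σ (a * x) - σ x := by
  have hσa : σ a - 1 ≠ 0 := sub_ne_zero.2 fun h => ha (σ.injective (h.trans (map_one σ).symm))
  have h : (fun x => σ (a * x) - σ x) = (Equiv.mulLeft₀ _ hσa) ∘ σ :=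
    funext (σ.map_mul_sub_map_eq a)
  rw [h]
  exact (Equiv.bijective _).comp σ.bijective

theorem stmt_8_general
    (F : Type*) [Field F]
    (lam : F ≃+* F) :
    ∀ α : F, α ≠ 0 → α ≠ 1 → ∀ β : F, ∃! x : F, lam (α * x) - lam x = β :=
  fun _ _ hα1 => (lam.bijective_map_mul_sub_map hα1).existsUnique

/-- Any field automorphism `λ` of a finite field `F` with `2 ^ m`
elements (`m > 1`) is `(Fˣ, ·)`-perfect nonlinear: for every `α ≠ 0, 1` and
every `β ∈ F` there is exactly one `x ∈ F` with `λ (α * x) - λ x = β`. -/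
theorem stmt_8 (m : ℕ) (hm : 1 < m)
    (F : Type*) [Field F] [Fintype F] (hF : Fintype.card F = 2 ^ m)
    (lam : F ≃+* F) :
    ∀ α : F, α ≠ 0 → α ≠ 1 → ∀ β : F, ∃! x : F, lam (α * x) - lam x = β :=
  stmt_8_general F lam
end

section
/- Let m > 1 be an integer and F a finite field with 2^m elements. Let G be a subgroup of the group of units (ℤ/(2^m − 1)ℤ)ˣ such that for every i ∈ G with i ≠ 1, the element i − 1 is a unit of ℤ/(2^m − 1)ℤ. Let λ : F → F be a field automorphism of F. Then for every i ∈ G with i ≠ 1 (with natural-number representative a), and for every β ∈ Fˣ, there exists exactly one x ∈ Fˣ such that λ(x^a) · λ(x)⁻¹ = β. -/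
/-! Since `λ` is multiplicative, `λ (x ^ a) * (λ x)⁻¹ = λ (x ^ (a - 1))` on `Fˣ`. The hypothesis on
`G` says that `a - 1` is prime to `|Fˣ| = 2 ^ m - 1`, so `x ↦ x ^ (a - 1)` permutes `Fˣ`, and so
does its composite with `λ`. -/

open Function

theorem zpow_bijective_of_isCoprime {G : Type*} [Group G] [Finite G] {k : ℤ}
    (hk : IsCoprime (Nat.card G : ℤ) k) : Bijective fun x : G ↦ x ^ k := by
  obtain ⟨a, b, hab⟩ := hk
  have hinv : LeftInverse (fun x : G ↦ x ^ b) (fun x ↦ x ^ k) := fun x ↦ by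
    have hkb : k * b = 1 + Nat.card G * (-a) := by linarith
    show (x ^ k) ^ b = x
    rw [← zpow_mul, ← zpow_mod_natCard, hkb, Int.add_mul_emod_self_left, zpow_mod_natCard,
      zpow_one]
  exact Finite.injective_iff_bijective.mp hinv.injective

theorem existsUnique_map_pow_mul_inv_eq {K L : Type*} [GroupWithZero K] [GroupWithZero L]
    [Finite Kˣ] (e : K ≃* L) {a : ℕ} (ha : IsCoprime (Nat.card Kˣ : ℤ) (a - 1)) (β : Lˣ) :
    ∃! x : Kˣ, e ((x : K) ^ a) * (e x)⁻¹ = β := by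
  have hderiv (x : Kˣ) :
      e ((x : K) ^ a) * (e x)⁻¹ = ((Units.map (e : K →* L) (x ^ ((a : ℤ) - 1)) : Lˣ) : L) := by
    rw [Units.coe_map, MonoidHom.coe_coe, zpow_sub_one, zpow_natCast, Units.val_mul, map_mul,
      Units.val_pow_eq_pow_val, Units.val_inv_eq_inv_val, map_inv₀]
  have hbij : Bijective fun x : Kˣ ↦ Units.map (e : K →* L) (x ^ ((a : ℤ) - 1)) :=
    (Units.mapEquiv e).bijective.comp (zpow_bijective_of_isCoprime ha)
  simpa only [hderiv, Units.val_inj] using hbij.existsUnique β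

theorem stmt_9_general (m : ℕ)
    (F : Type*) [Field F] [Fintype F] (hF : Fintype.card F = 2 ^ m)
    (G : Subgroup (ZMod (2 ^ m - 1))ˣ)
    (hG : ∀ i ∈ G, i ≠ 1 → IsUnit ((i : ZMod (2 ^ m - 1)) - 1))
    (lam : F ≃+* F) :
    ∀ i ∈ G, i ≠ 1 → ∀ β : Fˣ, ∃! x : Fˣ,
      lam ((x : F) ^ (i : ZMod (2 ^ m - 1)).val) * (lam (x : F))⁻¹ = (β : F) := by
  intro i hi hi1 β
  have hcard : Nat.card Fˣ = 2 ^ m - 1 := by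
    rw [Nat.card_units, Nat.card_eq_fintype_card, hF]
  have : NeZero (2 ^ m - 1) := ⟨hcard ▸ Nat.card_pos.ne'⟩
  have hcop : IsCoprime (Nat.card Fˣ : ℤ) ((i : ZMod (2 ^ m - 1)).val - 1) := by
    rw [← ZMod.coe_int_isUnit_iff_isCoprime, hcard]
    push_cast
    rw [ZMod.natCast_zmod_val]
    exact hG i hi hi1
  exact existsUnique_map_pow_mul_inv_eq lam.toMulEquiv hcop β

/-- Let `F` be a finite field with `2 ^ m` elements (`m > 1`) and
`G` a subgroup of `(ZMod (2 ^ m - 1))ˣ` such that `i - 1` is a unit of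
`ZMod (2 ^ m - 1)` for every `i ∈ G`, `i ≠ 1`. For any field automorphism
`λ` of `F`, every `i ∈ G` with `i ≠ 1` (with natural representative `a`) and
every `β ∈ Fˣ`, there is exactly one `x ∈ Fˣ` with `λ (x ^ a) * (λ x)⁻¹ = β`. -/
theorem stmt_9 (m : ℕ) (hm : 1 < m)
    (F : Type*) [Field F] [Fintype F] (hF : Fintype.card F = 2 ^ m)
    (G : Subgroup (ZMod (2 ^ m - 1))ˣ)
    (hG : ∀ i ∈ G, i ≠ 1 → IsUnit ((i : ZMod (2 ^ m - 1)) - 1))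
    (lam : F ≃+* F) :
    ∀ i ∈ G, i ≠ 1 → ∀ β : Fˣ, ∃! x : Fˣ,
      lam ((x : F) ^ (i : ZMod (2 ^ m - 1)).val) * (lam (x : F))⁻¹ = (β : F) :=
  stmt_9_general m F hF G hG lam
end

section
/- Let q be a prime such that p = 2^q − 1 is a (Mersenne) prime, let F be a finite field with 2^q elements, and let 0 ≤ r ≤ q − 1. Let λ : F → F be the r-th power of the Frobenius automorphism, λ(x) = x^(2^r). Then λ is (Fˣ, ·)-perfect nonlinear: for every α ∈ F with α ≠ 0 and α ≠ 1, and every β ∈ F, there exists exactly one x ∈ F such that (α · x)^(2^r) + x^(2^r) = β. -/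
/-!
In characteristic `p` the `r`-th Frobenius power `x ↦ x ^ p ^ r` is a ring map, so the derivative
`(α * x) ^ p ^ r - x ^ p ^ r` factors as `(α ^ p ^ r - 1) * x ^ p ^ r`. On a perfect field the
Frobenius power is bijective, and `α ^ p ^ r ≠ 1` for `α ≠ 1` by its injectivity; hence the
derivative is a bijection. A field with `2 ^ q` elements has characteristic `2`, where the
derivative is `(α * x) ^ 2 ^ r + x ^ 2 ^ r`.
-/

theorem bijective_mul_pow_sub_pow {F : Type*} [Field F] (p : ℕ) [ExpChar F p] [PerfectRing F p]
    {α : F} (hα : α ≠ 1) (r : ℕ) :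
    Function.Bijective fun x : F => (α * x) ^ p ^ r - x ^ p ^ r := by
  let φ := iterateFrobeniusEquiv F p r
  have hcoeff : α ^ p ^ r - 1 ≠ 0 := by
    rw [sub_ne_zero, ← one_pow (p ^ r)]
    exact fun h => hα (φ.injective h)
  have hfactor : (fun x : F => (α * x) ^ p ^ r - x ^ p ^ r) =
      fun x => (α ^ p ^ r - 1) * φ x := by
    funext x
    rw [iterateFrobeniusEquiv_def]
    ring
  rw [hfactor]
  exact (mulLeft_bijective₀ _ hcoeff).comp φ.bijective

theorem stmt_10_general (q : ℕ)
    (F : Type*) [Field F] [Fintype F] (hF : Fintype.card F = 2 ^ q)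
    (r : ℕ) :
    ∀ α : F, α ≠ 0 → α ≠ 1 → ∀ β : F,
      ∃! x : F, (α * x) ^ (2 ^ r) + x ^ (2 ^ r) = β := by
  intro α _ hα1 β
  have : CharP F 2 := charP_of_card_eq_prime_pow hF
  simpa only [CharTwo.sub_eq_add] using (bijective_mul_pow_sub_pow 2 hα1 r).existsUnique β

/-- Let `q` be a prime with `2 ^ q - 1` a (Mersenne) prime, `F`
a finite field with `2 ^ q` elements and `0 ≤ r ≤ q - 1`. The `r`-th power of
the Frobenius, `λ(x) = x ^ (2 ^ r)`, is `(Fˣ, ·)`-perfect nonlinear: for every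
`α ≠ 0, 1` and every `β ∈ F` there is exactly one `x ∈ F` with
`(α * x) ^ (2 ^ r) + x ^ (2 ^ r) = β`. -/
theorem stmt_10 (q : ℕ) (hq : q.Prime) (hmersenne : (2 ^ q - 1).Prime)
    (F : Type*) [Field F] [Fintype F] (hF : Fintype.card F = 2 ^ q)
    (r : ℕ) (hr : r ≤ q - 1) :
    ∀ α : F, α ≠ 0 → α ≠ 1 → ∀ β : F,
      ∃! x : F, (α * x) ^ (2 ^ r) + x ^ (2 ^ r) = β :=
  stmt_10_general q F hF r
end

section
/- Let q be a prime such that p = 2^q − 1 is a (Mersenne) prime, let F be a finite field with 2^q elements, and let 0 ≤ r ≤ q − 1. Let λ(x) = x^(2^r) be the r-th power of the Frobenius automorphism. Then for every integer i with 2 ≤ i ≤ 2^q − 2, and every β ∈ Fˣ, there exists exactly one x ∈ Fˣ such that λ(x^i) · λ(x)⁻¹ = β, i.e. exactly one nonzero x with x^(i·2^r) · (x^(2^r))⁻¹ = β. Together with the (Fˣ, ·)-perfect nonlinearity of λ, this makes λ a doubly perfect nonlinear permutation of F. -/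
/-! In characteristic two, `(α x)^(2^r) + x^(2^r) = ((α + 1) x)^(2^r)`, a bijective Frobenius power
composed with multiplication by the unit `α + 1`. On the other side,
`x^(i 2^r) (x^(2^r))⁻¹ = x^((i - 1) 2^r)` in `Fˣ`, and since `Fˣ` has prime order `2^q - 1`, which
divides neither `i - 1` nor `2^r`, this power map is a bijection of `Fˣ`. -/

theorem existsUnique_mul_pow_two_pow_add_pow_two_pow {F : Type*} [Field F] [CharP F 2]
    [PerfectRing F 2] {α : F} (hα : α ≠ 1) (r : ℕ) (β : F) :
    ∃! x : F, (α * x) ^ (2 ^ r) + x ^ (2 ^ r) = β := by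
  have hα' : α + 1 ≠ 0 := by rwa [Ne, CharTwo.add_eq_zero]
  have hfrob (x : F) :
      (α * x) ^ (2 ^ r) + x ^ (2 ^ r) = iterateFrobenius F 2 r ((α + 1) * x) := by
    rw [iterateFrobenius_def, add_mul, one_mul, add_pow_char_pow]
  simp_rw [hfrob]
  exact ((bijective_iterateFrobenius F 2 r).comp (mulLeft_bijective₀ _ hα')).existsUnique β

theorem existsUnique_pow_eq_of_coprime {G : Type*} [Group G] {n : ℕ}
    (hn : (Nat.card G).Coprime n) (b : G) : ∃! x : G, x ^ n = b :=
  (powCoprime hn).bijective.existsUnique b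

theorem existsUnique_units_pow_mul_inv_pow {F : Type*} [DivisionRing F] {i m : ℕ} (hi : 1 ≤ i)
    (hcop : (Nat.card Fˣ).Coprime ((i - 1) * m)) (β : Fˣ) :
    ∃! x : Fˣ, (x : F) ^ (i * m) * ((x : F) ^ m)⁻¹ = β := by
  have hpow (x : Fˣ) : (x : F) ^ (i * m) * ((x : F) ^ m)⁻¹ = ↑(x ^ ((i - 1) * m)) := by
    rw [Nat.sub_mul, one_mul, pow_sub _ (Nat.le_mul_of_pos_left m hi)]
    push_cast
    rfl
  simp_rw [hpow, Units.val_inj]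
  exact existsUnique_pow_eq_of_coprime hcop β

theorem Nat.Prime.coprime_mul_two_pow {p n : ℕ} (hp : p.Prime) (hp2 : p ≠ 2) (hn0 : 0 < n)
    (hnp : n < p) (r : ℕ) : p.Coprime (n * 2 ^ r) :=
  .mul_right ((hp.coprime_iff_not_dvd).2 (Nat.not_dvd_of_pos_of_lt hn0 hnp))
    (.pow_right r ((Nat.coprime_primes hp Nat.prime_two).2 hp2))

theorem stmt_11_general (q : ℕ) (hmersenne : (2 ^ q - 1).Prime)
    (F : Type*) [Field F] [Fintype F] (hF : Fintype.card F = 2 ^ q)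
    (r : ℕ) :
    (∀ α : F, α ≠ 0 → α ≠ 1 → ∀ β : F,
        ∃! x : F, (α * x) ^ (2 ^ r) + x ^ (2 ^ r) = β) ∧
      (∀ i : ℕ, 2 ≤ i → i ≤ 2 ^ q - 2 → ∀ β : Fˣ,
        ∃! x : Fˣ, (x : F) ^ (i * 2 ^ r) * ((x : F) ^ (2 ^ r))⁻¹ = (β : F)) := by
  have : CharP F 2 := charP_of_card_eq_prime_pow hF
  refine ⟨fun α _ hα β => existsUnique_mul_pow_two_pow_add_pow_two_pow hα r β,
    fun i hi2 hi β => existsUnique_units_pow_mul_inv_pow (by omega) ?_ β⟩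
  rw [Nat.card_units, Nat.card_eq_fintype_card, hF]
  exact hmersenne.coprime_mul_two_pow (by omega) (by omega) (by omega) r

/-- Let `q` be a prime with `p = 2 ^ q - 1` a (Mersenne) prime,
`F` a finite field with `2 ^ q` elements, `0 ≤ r ≤ q - 1`, and
`λ(x) = x ^ (2 ^ r)` the `r`-th Frobenius power. Then for every `i` with
`2 ≤ i ≤ 2 ^ q - 2` and every `β ∈ Fˣ`, there is exactly one `x ∈ Fˣ` with
`λ(x ^ i) * (λ x)⁻¹ = β`, i.e. `x ^ (i * 2 ^ r) * (x ^ (2 ^ r))⁻¹ = β`.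
Together with the `(Fˣ, ·)`-perfect nonlinearity of `λ` (first conjunct),
this makes `λ` a doubly perfect nonlinear permutation of `F`. -/
theorem stmt_11 (q : ℕ) (hq : q.Prime) (hmersenne : (2 ^ q - 1).Prime)
    (F : Type*) [Field F] [Fintype F] (hF : Fintype.card F = 2 ^ q)
    (r : ℕ) (hr : r ≤ q - 1) :
    (∀ α : F, α ≠ 0 → α ≠ 1 → ∀ β : F,
        ∃! x : F, (α * x) ^ (2 ^ r) + x ^ (2 ^ r) = β) ∧
      (∀ i : ℕ, 2 ≤ i → i ≤ 2 ^ q - 2 → ∀ β : Fˣ,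
        ∃! x : Fˣ, (x : F) ^ (i * 2 ^ r) * ((x : F) ^ (2 ^ r))⁻¹ = (β : F)) :=
  stmt_11_general q hmersenne F hF r
end
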